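/- arXiv:2008.07124 — 7 statements merged into one kernel-verified Lean document; each statement's English description precedes it below -/
import Mathlib

section
/- Let r be a binary relation on a set α, let n be a positive natural number, and let f : αⁿ → α be any function. Suppose that for every tuple a ∈ αⁿ all of whose components lie in Acc(r): if f(b) ∈ Acc(r) for every tuple b ∈ αⁿ with all components in Acc(r) and with b <_lex a, then f(a) ∈ Acc(r). Then f(a) ∈ Acc(r) for every tuple a ∈ αⁿ all of whose components lie in Acc(r). -/
/-- Lexicographic extension of a relation `r` to `n`-tuples:
`b <_lex a` iff there is an index `i` with `b j = a j` for all `j < i` and `r (b i) (a i)`. -/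
def FinLex {α : Type} (r : α → α → Prop) {n : ℕ} (b a : Fin n → α) : Prop :=
  ∃ i : Fin n, (∀ j : Fin n, j < i → b j = a j) ∧ r (b i) (a i)

/-- Progressiveness along the lexicographic extension of `r`, restricted to tuples with
accessible components, propagates to all tuples with accessible components. -/
theorem stmt_1 {α : Type} (r : α → α → Prop) (n : ℕ) (hn : 0 < n)
    (f : (Fin n → α) → α)
    (hprog : ∀ a : Fin n → α, (∀ i, Acc r (a i)) →
      ((∀ b : Fin n → α, (∀ i, Acc r (b i)) → FinLex r b a → Acc r (f b)) → Acc r (f a))) :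
    ∀ a : Fin n → α, (∀ i, Acc r (a i)) → Acc r (f a) := by
  set α' := {x : α // Acc r x} with hα'
  set r' : α' → α' → Prop := fun x y => r x.1 y.1 with hr'
  have hwf' : WellFounded r' := by
    constructor
    rintro ⟨x, hx⟩
    induction hx with
    | intro x _ ih =>
      exact ⟨_, fun ⟨y, hy⟩ h => ih y h⟩
  have hwf : WellFounded (Pi.Lex ((· < ·) : Fin n → Fin n → Prop) (fun {_} => r')) :=
    Pi.Lex.wellFounded _ (fun _ => hwf')
  have key : ∀ a' : Fin n → α', Acc r (f (fun i => (a' i).1)) := by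
    intro a'
    induction a' using hwf.induction with
    | _ a' ih =>
      apply hprog _ (fun i => (a' i).2)
      intro b hb hlex
      have : Acc r (f (fun i => ((fun i => (⟨b i, hb i⟩ : α')) i).1)) := by
        apply ih
        obtain ⟨i, hj, hi⟩ := hlex
        exact ⟨i, fun j hji => Subtype.ext (hj j hji), hi⟩
      simpa using this
  intro a ha
  simpa using key (fun i => ⟨a i, ha i⟩)
end

section
/- Let f be a function symbol of L of arity n, and suppose that for every function symbol g with g < f (say of arity m) and every tuple b of m closed terms all lying in Acc(<_lpo), the term g(b) lies in Acc(<_lpo). Then for every tuple a of n closed terms with all components in Acc(<_lpo), the following progressiveness holds: if f(b) ∈ Acc(<_lpo) for every tuple b of n closed terms with all components in Acc(<_lpo) and b lexicographically smaller than a with respect to <_lpo, then f(a) ∈ Acc(<_lpo). -/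
/-- Closed terms over a signature `F` with arity function `ar`. -/
inductive Trm (F : Type) (ar : F → ℕ) : Type
  | app : (f : F) → (Fin (ar f) → Trm F ar) → Trm F ar

/-- The lexicographic path order on closed terms, with respect to a precedence `prec`:
`s <_lpo f(t₁,…,tₙ)` iff (i) `s = tᵢ` or `s <_lpo tᵢ` for some `i`, or
(ii) `s = g(s₁,…,s_m)` with `g < f` and `sⱼ <_lpo f(t₁,…,tₙ)` for all `j`, or
(iii) `s = f(s₁,…,sₙ)` with `(s₁,…,sₙ)` lexicographically smaller than `(t₁,…,tₙ)`
w.r.t. `<_lpo` and `sⱼ <_lpo f(t₁,…,tₙ)` for all `j`. -/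
inductive Lpo {F : Type} {ar : F → ℕ} (prec : F → F → Prop) :
    Trm F ar → Trm F ar → Prop
  | sub_eq {f : F} (ts : Fin (ar f) → Trm F ar) (i : Fin (ar f)) :
      Lpo prec (ts i) (Trm.app f ts)
  | sub_lt {f : F} {ts : Fin (ar f) → Trm F ar} (i : Fin (ar f)) {s : Trm F ar} :
      Lpo prec s (ts i) → Lpo prec s (Trm.app f ts)
  | prec_lt {g f : F} {ss : Fin (ar g) → Trm F ar} {ts : Fin (ar f) → Trm F ar} :
      prec g f → (∀ j, Lpo prec (ss j) (Trm.app f ts)) →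
      Lpo prec (Trm.app g ss) (Trm.app f ts)
  | lex {f : F} {ss ts : Fin (ar f) → Trm F ar} (i : Fin (ar f)) :
      (∀ j : Fin (ar f), j < i → ss j = ts j) → Lpo prec (ss i) (ts i) →
      (∀ j, Lpo prec (ss j) (Trm.app f ts)) →
      Lpo prec (Trm.app f ss) (Trm.app f ts)

/-- If for every function symbol `g` with `g < f` and every tuple `b` of closed terms
all lying in `Acc (<_lpo)` the term `g(b)` lies in `Acc (<_lpo)`, then for every tuple
`a` of `ar f` closed terms with all components in `Acc (<_lpo)`: if `f(b) ∈ Acc (<_lpo)`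
for every tuple `b` with all components in `Acc (<_lpo)` and `b` lexicographically
smaller than `a` w.r.t. `<_lpo`, then `f(a) ∈ Acc (<_lpo)`. -/
theorem stmt_3 {F : Type} {ar : F → ℕ} (prec : F → F → Prop)
    (hirr : ∀ f, ¬ prec f f) (htr : ∀ f g h, prec f g → prec g h → prec f h)
    (f : F)
    (hbelow : ∀ g : F, prec g f → ∀ b : Fin (ar g) → Trm F ar,
      (∀ i, Acc (Lpo prec) (b i)) → Acc (Lpo prec) (Trm.app g b)) :
    ∀ a : Fin (ar f) → Trm F ar, (∀ i, Acc (Lpo prec) (a i)) →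
      ((∀ b : Fin (ar f) → Trm F ar, (∀ i, Acc (Lpo prec) (b i)) →
          FinLex (Lpo prec) b a → Acc (Lpo prec) (Trm.app f b)) →
        Acc (Lpo prec) (Trm.app f a)) := by
  intro a ha hprog
  have key : ∀ s : Trm F ar, Lpo prec s (Trm.app f a) → Acc (Lpo prec) s := by
    intro s
    induction s with
    | app g ss ih =>
      intro hs
      generalize hgs : Trm.app g ss = s' at hs
      cases hs with
      | sub_eq ts i => exact hgs ▸ (ha i)
      | sub_lt i h => exact (ha i).inv (hgs ▸ h)
      | @prec_lt g2 _ ss2 _ hgf hall =>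
          cases hgs
          exact hbelow _ hgf _ (fun j => ih j (hall j))
      | @lex _ ss2 _ i heq hlt hall =>
          cases hgs
          exact hprog _ (fun j => ih j (hall j)) ⟨i, heq, hlt⟩
  exact ⟨_, key⟩
end

section
/- Assume the precedence < on the function symbols of L is well-founded. Then for every function symbol f of arity n and every tuple a = (a₁,…,aₙ) of closed terms with a₁,…,aₙ ∈ Acc(<_lpo), the term f(a₁,…,aₙ) lies in Acc(<_lpo). -/
/-- Lexicographic extension (restricted to tuples of accessible components) preserves
accessibility. -/
lemma accFinLex {α : Type} (r : α → α → Prop) :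
    ∀ {n : ℕ} (a : Fin n → α), (∀ i, Acc r (a i)) →
      Acc (fun b c : Fin n → α => (∀ i, Acc r (b i)) ∧ FinLex r b c) a := by
  intro n
  induction n with
  | zero =>
    intro a _
    exact Acc.intro a (fun b hb => (hb.2.choose).elim0)
  | succ n IH =>
    suffices aux : ∀ h : α, Acc r h → ∀ t : Fin n → α,
        Acc (fun b c : Fin n → α => (∀ i, Acc r (b i)) ∧ FinLex r b c) t →
        Acc (fun b c : Fin (n+1) → α => (∀ i, Acc r (b i)) ∧ FinLex r b c)
          (Fin.cons h t) by
      intro a ha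
      have := aux (a 0) (ha 0) (Fin.tail a) (IH (Fin.tail a) (fun i => ha i.succ))
      rwa [Fin.cons_self_tail] at this
    intro h hh
    induction hh with
    | intro h _ IHh =>
      intro t ht
      induction ht with
      | intro t htacc IHt =>
        constructor
        rintro b ⟨hb, i, hji, hri⟩
        have hbeq : b = Fin.cons (b 0) (Fin.tail b) := (Fin.cons_self_tail b).symm
        rcases Fin.eq_zero_or_eq_succ i with rfl | ⟨i', rfl⟩
        · rw [hbeq]
          refine IHh (b 0) ?_ (Fin.tail b) (IH (Fin.tail b) (fun j => hb j.succ))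
          simpa using hri
        · have h0 : b 0 = h := by
            have := hji 0 (Fin.succ_pos i')
            simpa using this
          rw [hbeq, h0]
          refine IHt (Fin.tail b) ⟨fun j => hb j.succ, i', fun j hj => ?_, ?_⟩
          · have := hji j.succ (by simpa using hj)
            simpa [Fin.tail] using this
          · simpa [Fin.tail] using hri

/-- If the precedence is well-founded, then for every function symbol `f` and every tuple
`a` of closed terms with all components in `Acc (<_lpo)`, the term `f(a)` lies in
`Acc (<_lpo)`. -/
theorem stmt_4 {F : Type} {ar : F → ℕ} (prec : F → F → Prop)
    (hirr : ∀ f, ¬ prec f f) (htr : ∀ f g h, prec f g → prec g h → prec f h)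
    (hwf : WellFounded prec) :
    ∀ (f : F) (a : Fin (ar f) → Trm F ar),
      (∀ i, Acc (Lpo prec) (a i)) → Acc (Lpo prec) (Trm.app f a) := by
  intro f a ha
  induction hwf.apply f with
  | intro f _ IHf =>
    have inner : ∀ a : Fin (ar f) → Trm F ar,
        Acc (fun b c : Fin (ar f) → Trm F ar =>
          (∀ i, Acc (Lpo prec) (b i)) ∧ FinLex (Lpo prec) b c) a →
        (∀ i, Acc (Lpo prec) (a i)) → Acc (Lpo prec) (Trm.app f a) := by
      intro a hR
      induction hR with
      | intro a _ IHa =>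
        intro ha
        have key : ∀ s t, Lpo prec s t → t = Trm.app f a → Acc (Lpo prec) s := by
          intro s t h
          induction h with
          | sub_eq ts i =>
            intro he
            injection he with h1 h2
            subst h1
            have h3 := eq_of_heq h2; subst h3
            exact ha i
          | sub_lt i hlt IH =>
            intro he
            injection he with h1 h2
            subst h1
            have h3 := eq_of_heq h2; subst h3
            exact (ha i).inv hlt
          | prec_lt hg hall IH =>
            intro he
            injection he with h1 h2
            subst h1
            have h3 := eq_of_heq h2; subst h3
            exact IHf _ hg _ (fun j => IH j rfl)
          | lex i heq hlt hall IH1 IH2 =>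
            intro he
            injection he with h1 h2
            subst h1
            have h3 := eq_of_heq h2; subst h3
            exact IHa _ ⟨fun j => IH2 j rfl, i, heq, hlt⟩ (fun j => IH2 j rfl)
        exact Acc.intro _ (fun s hs => key s _ hs rfl)
    exact inner a (accFinLex (Lpo prec) a ha) ha
end

section
/- Assume the precedence < on the function symbols of L is well-founded. Then the lexicographic path order <_lpo is a well-founded relation on the set of closed terms over L; that is, every closed term lies in Acc(<_lpo). -/
theorem finLex_wf {α : Type} {r : α → α → Prop} (h : WellFounded r) :
    ∀ n, WellFounded (FinLex r (n := n)) := by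
  intro n
  induction n with
  | zero =>
    constructor; intro a; constructor; rintro b ⟨i, -, -⟩; exact i.elim0
  | succ n IH =>
    have hp : WellFounded (Prod.Lex r (FinLex r (n := n))) := WellFounded.prod_lex h IH
    have := InvImage.wf (fun v : Fin (n+1) → α => (v 0, v ∘ Fin.succ)) hp
    refine Subrelation.wf ?_ this
    rintro b a ⟨i, hj, hi⟩
    induction i using Fin.cases with
    | zero => exact Prod.Lex.left _ _ hi
    | succ i' =>
      have h0 : b 0 = a 0 := hj 0 (Fin.succ_pos i')
      show Prod.Lex r (FinLex r) (b 0, b ∘ Fin.succ) (a 0, a ∘ Fin.succ)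
      rw [h0]
      exact Prod.Lex.right _ ⟨i', fun j hji => hj j.succ (by simpa using hji), hi⟩

/-- If the precedence is well-founded, then `<_lpo` is well-founded on closed terms:
every closed term lies in `Acc (<_lpo)`. -/
theorem stmt_5 {F : Type} {ar : F → ℕ} (prec : F → F → Prop)
    (hirr : ∀ f, ¬ prec f f) (htr : ∀ f g h, prec f g → prec g h → prec f h)
    (hwf : WellFounded prec) :
    WellFounded (Lpo prec (F := F) (ar := ar)) ∧ ∀ t : Trm F ar, Acc (Lpo prec) t := by
  have main : ∀ f : F, ∀ ts : Fin (ar f) → Trm F ar,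
      (∀ i, Acc (Lpo prec) (ts i)) → Acc (Lpo prec) (Trm.app f ts) := by
    intro f
    induction f using hwf.induction with
    | _ f IHf =>
      -- the subtype of accessible terms
      let A := {t : Trm F ar // Acc (Lpo prec) t}
      let r' : A → A → Prop := fun a b => Lpo prec a.1 b.1
      have hr' : WellFounded r' := by
        constructor
        rintro ⟨t, ht⟩
        induction ht with
        | intro t _ IH =>
          constructor
          rintro ⟨s, hs⟩ h
          exact IH s h
      have hlex := finLex_wf hr' (ar f)
      have key : ∀ tv : Fin (ar f) → A,
          Acc (Lpo prec) (Trm.app f (fun i => (tv i).1)) := by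
        intro tv
        induction tv using hlex.induction with
        | _ tv IHtv =>
          constructor
          intro s hs
          have gen : ∀ u s, Lpo prec s u →
              u = Trm.app f (fun i => (tv i).1) → Acc (Lpo prec) s := by
            intro u s hs
            induction hs with
            | sub_eq ts0 i =>
              intro he
              injection he with e1 e2
              subst e1
              have e2' := eq_of_heq e2
              subst e2'
              exact (tv i).2
            | sub_lt i hlt _ =>
              intro he
              injection he with e1 e2
              subst e1
              have e2' := eq_of_heq e2
              subst e2'
              exact ((tv i).2).inv hlt
            | prec_lt hg hss IH =>
              intro he
              injection he with e1 e2
              subst e1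
              have e2' := eq_of_heq e2
              subst e2'
              exact IHf _ hg _ (fun j => IH j rfl)
            | lex i heq hlt hss IH1 IH2 =>
              intro he
              injection he with e1 e2
              subst e1
              have e2' := eq_of_heq e2
              subst e2'
              have hssacc := fun j => IH2 j rfl
              exact IHtv (fun j => ⟨_, hssacc j⟩)
                ⟨i, fun j hj => Subtype.ext (heq j hj), hlt⟩
          exact gen _ s hs rfl
      intro ts hts
      exact key (fun i => ⟨ts i, hts i⟩)
  have acc_all : ∀ t : Trm F ar, Acc (Lpo prec) t := by
    intro t
    induction t with
    | app f ts IH => exact main f ts IH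
  exact ⟨⟨acc_all⟩, acc_all⟩
end

section
/- Assume the signature L is finite, i.e., L has only finitely many function symbols (each of finite arity). Then for every natural number p and every closed term t over L, the set of predecessors {s : s <_p t} is finite. -/
/-- The finite approximations `<_p` of the lexicographic path order:
no terms satisfy `s <_0 t`, and `s <_{p+1} f(t₁,…,tₙ)` iff (i) `s = tᵢ` or `s <_p tᵢ`
for some `i`, or (ii) `s = g(s₁,…,s_m)` with `g < f` and `sⱼ <_p f(t₁,…,tₙ)` for all `j`, or
(iii) `s = f(s₁,…,sₙ)` with `(s₁,…,sₙ)` lexicographically smaller than `(t₁,…,tₙ)`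
w.r.t. `<_p` and `sⱼ <_p f(t₁,…,tₙ)` for all `j`. -/
def LpoApprox {F : Type} {ar : F → ℕ} (prec : F → F → Prop) :
    ℕ → Trm F ar → Trm F ar → Prop
  | 0, _, _ => False
  | (p+1), s, Trm.app f ts =>
      (∃ i, s = ts i ∨ LpoApprox prec p s (ts i)) ∨
      (∃ g, ∃ ss : Fin (ar g) → Trm F ar, s = Trm.app g ss ∧ prec g f ∧
        ∀ j, LpoApprox prec p (ss j) (Trm.app f ts)) ∨
      (∃ ss : Fin (ar f) → Trm F ar, s = Trm.app f ss ∧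
        (∃ i : Fin (ar f), (∀ j : Fin (ar f), j < i → ss j = ts j) ∧
          LpoApprox prec p (ss i) (ts i)) ∧
        ∀ j, LpoApprox prec p (ss j) (Trm.app f ts))

/-- If the signature `F` is finite, then for every `p` and every closed term `t`, the set
of `<_p`-predecessors `{s : s <_p t}` is finite. -/
theorem stmt_9 {F : Type} {ar : F → ℕ} [Finite F] (prec : F → F → Prop)
    (hirr : ∀ f, ¬ prec f f) (htr : ∀ f g h, prec f g → prec g h → prec f h) :
    ∀ (p : ℕ) (t : Trm F ar), {s : Trm F ar | LpoApprox prec p s t}.Finite := by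
  intro p
  induction p with
  | zero =>
    intro t
    exact Set.finite_empty.subset (fun s h => h.elim)
  | succ p ih =>
    intro t
    obtain ⟨f, ts⟩ := t
    have h2 : {s | ∃ g, ∃ ss : Fin (ar g) → Trm F ar, s = Trm.app g ss ∧
        ∀ j, LpoApprox prec p (ss j) (Trm.app f ts)}.Finite := by
      have hS := ih (Trm.app f ts)
      have : Finite ↥{s | LpoApprox prec p s (Trm.app f ts)} := hS.to_subtype
      apply Set.Finite.subset (Set.finite_range (fun x : Σ g, (Fin (ar g) →
        {s | LpoApprox prec p s (Trm.app f ts)}) => Trm.app x.1 (fun j => (x.2 j : Trm F ar))))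
      rintro s ⟨g, ss, rfl, h⟩
      exact ⟨⟨g, fun j => ⟨ss j, h j⟩⟩, rfl⟩
    have h1 : (⋃ i, {ts i} ∪ {s | LpoApprox prec p s (ts i)}).Finite :=
      Set.finite_iUnion (fun i => (Set.finite_singleton _).union (ih (ts i)))
    apply Set.Finite.subset (h1.union h2)
    intro s hs
    simp only [Set.mem_setOf_eq, LpoApprox] at hs
    rcases hs with ⟨i, h⟩ | ⟨g, ss, rfl, _, h⟩ | ⟨ss, rfl, _, h⟩
    · refine Or.inl (Set.mem_iUnion.2 ⟨i, ?_⟩)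
      rcases h with rfl | h
      · exact Or.inl rfl
      · exact Or.inr h
    · exact Or.inr ⟨g, ss, rfl, h⟩
    · exact Or.inr ⟨f, ss, rfl, h⟩
end

section
/- Assume the precedence < on the function symbols of L is well-founded. Then for every natural number p, the approximation relation <_p is well-founded on the set of closed terms over L. -/
theorem LpoApprox.not_zero {F : Type} {ar : F → ℕ} {prec : F → F → Prop}
    {s t : Trm F ar} (h : LpoApprox prec 0 s t) : False := h

theorem LpoApprox.subterm {F : Type} {ar : F → ℕ} (prec : F → F → Prop) (q : ℕ)
    (f : F) (ss : Fin (ar f) → Trm F ar) (j : Fin (ar f)) :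
    LpoApprox prec (q+1) (ss j) (Trm.app f ss) :=
  Or.inl ⟨j, Or.inl rfl⟩

theorem LpoApprox.mono {F : Type} {ar : F → ℕ} (prec : F → F → Prop) :
    ∀ p (s t : Trm F ar), LpoApprox prec p s t → LpoApprox prec (p+1) s t := by
  intro p
  induction p with
  | zero => intro s t h; exact h.not_zero.elim
  | succ p ih =>
    rintro s ⟨f, ts⟩ (⟨i, hi | hi⟩ | ⟨g, ss, rfl, hgf, hj⟩ | ⟨ss, rfl, ⟨i, hlt, hi⟩, hj⟩)
    · exact Or.inl ⟨i, Or.inl hi⟩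
    · exact Or.inl ⟨i, Or.inr (ih _ _ hi)⟩
    · exact Or.inr (Or.inl ⟨g, ss, rfl, hgf, fun j => ih _ _ (hj j)⟩)
    · exact Or.inr (Or.inr ⟨ss, rfl, ⟨i, hlt, ih _ _ hi⟩, fun j => ih _ _ (hj j)⟩)

theorem lpo_acc_app {F : Type} {ar : F → ℕ} {prec : F → F → Prop}
    (hwf : WellFounded prec) (p : ℕ)
    (wp : WellFounded (LpoApprox prec p (F := F) (ar := ar))) :
    ∀ f (ts : Fin (ar f) → Trm F ar),
      (∀ i, Acc (LpoApprox prec (p+1)) (ts i)) →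
      Acc (LpoApprox prec (p+1)) (Trm.app f ts) := by
  intro f
  induction f using hwf.induction with
  | _ f IHf =>
  have lexwf : WellFounded (Pi.Lex (· < ·)
      (fun {_ : Fin (ar f)} => LpoApprox prec p (F := F) (ar := ar))) :=
    Pi.Lex.wellFounded (s := fun {_ : Fin (ar f)} => LpoApprox prec p (F := F) (ar := ar))
      _ (fun _ => wp)
  intro ts
  induction ts using lexwf.induction with
  | _ ts IHts =>
  intro hts
  constructor
  intro s hs
  induction s using wp.induction with
  | _ s IHs =>
  rcases hs with ⟨i, hi | hi⟩ | ⟨g, ss, rfl, hgf, hj⟩ | ⟨ss, rfl, hlex, hj⟩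
  · exact hi ▸ hts i
  · exact (hts i).inv (LpoApprox.mono prec p _ _ hi)
  · refine IHf g hgf ss (fun j => ?_)
    obtain ⟨q, rfl⟩ : ∃ q, p = q + 1 := by
      cases p
      · exact ((hj j).not_zero).elim
      · exact ⟨_, rfl⟩
    exact IHs (ss j) (LpoApprox.subterm prec _ g ss j) (LpoApprox.mono prec _ _ _ (hj j))
  · refine IHts ss hlex (fun j => ?_)
    obtain ⟨q, rfl⟩ : ∃ q, p = q + 1 := by
      cases p
      · exact ((hj j).not_zero).elim
      · exact ⟨_, rfl⟩
    exact IHs (ss j) (LpoApprox.subterm prec _ f ss j) (LpoApprox.mono prec _ _ _ (hj j))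

/-- If the precedence is well-founded, then every approximation `<_p` is well-founded on
the set of closed terms. -/
theorem stmt_10 {F : Type} {ar : F → ℕ} (prec : F → F → Prop)
    (hirr : ∀ f, ¬ prec f f) (htr : ∀ f g h, prec f g → prec g h → prec f h)
    (hwf : WellFounded prec) :
    ∀ p : ℕ, WellFounded (LpoApprox prec p (F := F) (ar := ar)) := by
  intro p
  induction p with
  | zero => exact ⟨fun a => ⟨a, fun y h => h.not_zero.elim⟩⟩
  | succ p ih =>
    constructor
    intro t
    induction t with
    | app f ts iht => exact lpo_acc_app hwf p ih f ts iht
end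

section
/- The lexicographic path order <_lpo (with respect to an irreflexive and transitive precedence <) is transitive on closed terms over L: if r <_lpo s and s <_lpo t then r <_lpo t. -/

def Trm.size {F : Type} {ar : F → ℕ} : Trm F ar → ℕ
  | .app _ ts => 1 + Finset.univ.sum fun i => (ts i).size

lemma Trm.size_lt {F : Type} {ar : F → ℕ} (f : F) (ts : Fin (ar f) → Trm F ar)
    (i : Fin (ar f)) : (ts i).size < (Trm.app f ts).size := by
  have h : (ts i).size ≤ Finset.univ.sum fun j => (ts j).size :=
    Finset.single_le_sum (f := fun j => (ts j).size) (fun _ _ => Nat.zero_le _) (Finset.mem_univ i)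
  show _ < 1 + _
  omega

/-- The lexicographic path order w.r.t. an irreflexive and transitive precedence is
transitive on closed terms: `r <_lpo s` and `s <_lpo t` imply `r <_lpo t`. -/
theorem stmt_12 {F : Type} {ar : F → ℕ} (prec : F → F → Prop)
    (hirr : ∀ f, ¬ prec f f) (htr : ∀ f g h, prec f g → prec g h → prec f h) :
    ∀ r s t : Trm F ar, Lpo prec r s → Lpo prec s t → Lpo prec r t := by
  suffices h : ∀ n, ∀ r s t : Trm F ar, r.size + s.size + t.size ≤ n →
      Lpo prec r s → Lpo prec s t → Lpo prec r t by
    intro r s t h1 h2; exact h _ r s t le_rfl h1 h2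
  intro n
  induction n with
  | zero =>
    intro r s t hn _ _
    cases r with
    | app f ts =>
      have : (Trm.app f ts).size = 1 + Finset.univ.sum fun i => (ts i).size := rfl
      omega
  | succ n ih =>
    intro r s t hn hrs hst
    have hst' := hst
    cases hst with
    | sub_eq ts i => exact Lpo.sub_lt i hrs
    | @sub_lt f ts i s hs =>
      have hlt := Trm.size_lt f ts i
      exact Lpo.sub_lt i (ih r s (ts i) (by omega) hrs hs)
    | @prec_lt g f ss ts hgf hall =>
      have hrs' := hrs
      cases hrs with
      | sub_eq _ j => exact hall j
      | @sub_lt _ _ j r hr =>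
        have hlt := Trm.size_lt g ss j
        exact ih r (ss j) (Trm.app f ts) (by omega) hr (hall j)
      | @prec_lt h _ rs _ hhg hall' =>
        refine Lpo.prec_lt (htr _ _ _ hhg hgf) (fun k => ?_)
        have hlt := Trm.size_lt h rs k
        exact ih (rs k) (Trm.app g ss) (Trm.app f ts) (by omega) (hall' k) hst'
      | @lex _ rs _ i' heq hlt hall' =>
        refine Lpo.prec_lt hgf (fun k => ?_)
        have hlt2 := Trm.size_lt g rs k
        exact ih (rs k) (Trm.app g ss) (Trm.app f ts) (by omega) (hall' k) hst'
    | @lex f ss ts i heq hlt hall =>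
      have hrs' := hrs
      cases hrs with
      | sub_eq _ j => exact hall j
      | @sub_lt _ _ j r hr =>
        have hs := Trm.size_lt f ss j
        exact ih r (ss j) (Trm.app f ts) (by omega) hr (hall j)
      | @prec_lt h _ rs _ hhf hall' =>
        refine Lpo.prec_lt hhf (fun k => ?_)
        have hs := Trm.size_lt h rs k
        exact ih (rs k) (Trm.app f ss) (Trm.app f ts) (by omega) (hall' k) hst'
      | @lex _ rs _ i' heq' hlt' hall' =>
        have hallt : ∀ k, Lpo prec (rs k) (Trm.app f ts) := fun k => by
          have hs := Trm.size_lt f rs k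
          exact ih (rs k) (Trm.app f ss) (Trm.app f ts) (by omega) (hall' k) hst'
        rcases lt_trichotomy i' i with hc | hc | hc
        · refine Lpo.lex i' (fun j hj => ?_) ?_ hallt
          · rw [heq' j hj, heq j (hj.trans hc)]
          · rw [← heq i' hc]; exact hlt'
        · subst hc
          refine Lpo.lex i' (fun j hj => ?_) ?_ hallt
          · rw [heq' j hj, heq j hj]
          · have h1 := Trm.size_lt f rs i'
            have h2 := Trm.size_lt f ss i'
            have h3 := Trm.size_lt f ts i'
            exact ih (rs i') (ss i') (ts i') (by omega) hlt' hlt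
        · refine Lpo.lex i (fun j hj => ?_) ?_ hallt
          · rw [heq' j (hj.trans hc), heq j hj]
          · rw [heq' i hc]; exact hlt
end
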